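/- Let S₄ = {1, i, −1, −i} ⊆ ℂ be the QPSK signal set and for γ > 0, θ ∈ ℝ define d_min(γ, θ) = min{|(s₁ − s₁′) + γe^{iθ}(s₂ − s₂′)| : (s₁, s₂) ≠ (s₁′, s₂′) ∈ S₄ × S₄}. Let θ* = arcsin(1/(2√2)). Then d_min(√2, θ*) = √(6 − 2√7), and for every θ ∈ [0, π/4], d_min(√2, θ) ≤ √(6 − 2√7). That is, on the arc γ = √2, θ ∈ [0, π/4], the minimum distance of the effective constellation is maximized at θ = arcsin(1/(2√2)) ≈ 20.7° (so the optimal rotation for the violation circle centred at the singular fade state (√2, π/4) is by π/4 − arcsin(1/(2√2)) ≈ 24.3° clockwise). -/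

import Mathlib

/-- The minimum distance of the effective constellation for two QPSK users at fade state
`γe^{iθ}`. -/
noncomputable def qpskDmin (γ θ : ℝ) : ℝ :=
  sInf {d : ℝ | ∃ s₁ ∈ ({1, Complex.I, -1, -Complex.I} : Set ℂ),
      ∃ s₂ ∈ ({1, Complex.I, -1, -Complex.I} : Set ℂ),
      ∃ s₁' ∈ ({1, Complex.I, -1, -Complex.I} : Set ℂ),
      ∃ s₂' ∈ ({1, Complex.I, -1, -Complex.I} : Set ℂ),
      (s₁, s₂) ≠ (s₁', s₂') ∧
      d = ‖(s₁ - s₁') + (γ : ℂ) * Complex.exp ((θ : ℂ) * Complex.I) * (s₂ - s₂')‖}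

/-!
Write `c = √2 e^{iθ}`. Every difference of two QPSK points lies in `{0, ±2, ±2i, ±1 ± i}`. Two
particular pairs of distinct points give `|(1 + i)(1 - c)|² = 6 - 4√2 cos θ` and
`|2 + (i - 1)c|² = 8 - 4√2 (cos θ + sin θ)`; on `[0, π/4]` the first increases and the second
decreases, and they meet at `θ⋆ = arcsin (1/(2√2))`, where `c = (√7 + i)/2` and both equal
`6 - 2√7`. A finite check over all pairs of differences shows that nothing is shorter at `θ⋆`.
-/

open Complex Real

def qpskDiffs : Set ℂ := {0, 2, -2, 2 * I, -2 * I, 1 + I, 1 - I, -1 + I, -1 - I}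

lemma sub_mem_qpskDiffs {s s' : ℂ} (hs : s ∈ ({1, I, -1, -I} : Set ℂ))
    (hs' : s' ∈ ({1, I, -1, -I} : Set ℂ)) : s - s' ∈ qpskDiffs := by
  simp only [qpskDiffs, Set.mem_insert_iff, Set.mem_singleton_iff] at hs hs' ⊢
  rcases hs with rfl | rfl | rfl | rfl <;> rcases hs' with rfl | rfl | rfl | rfl <;>
    norm_num [Complex.ext_iff]

lemma qpskDmin_le {γ θ : ℝ} {s₁ s₂ s₁' s₂' : ℂ} (h₁ : s₁ ∈ ({1, I, -1, -I} : Set ℂ))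
    (h₂ : s₂ ∈ ({1, I, -1, -I} : Set ℂ)) (h₁' : s₁' ∈ ({1, I, -1, -I} : Set ℂ))
    (h₂' : s₂' ∈ ({1, I, -1, -I} : Set ℂ)) (hne : (s₁, s₂) ≠ (s₁', s₂')) :
    qpskDmin γ θ ≤ ‖(s₁ - s₁') + γ * exp (θ * I) * (s₂ - s₂')‖ := by
  refine csInf_le ⟨0, ?_⟩ ⟨s₁, h₁, s₂, h₂, s₁', h₁', s₂', h₂', hne, rfl⟩
  rintro _ ⟨-, -, -, -, -, -, -, -, -, rfl⟩
  exact norm_nonneg _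

lemma le_qpskDmin {γ θ d : ℝ}
    (h : ∀ Δ₁ ∈ qpskDiffs, ∀ Δ₂ ∈ qpskDiffs, (Δ₁, Δ₂) ≠ 0 → d ≤ ‖Δ₁ + γ * exp (θ * I) * Δ₂‖) :
    d ≤ qpskDmin γ θ := by
  refine le_csInf ⟨_, 1, by simp, 1, by simp, -1, by simp, 1, by simp,
    by norm_num [Prod.ext_iff], rfl⟩ ?_
  rintro _ ⟨s₁, h₁, s₂, h₂, s₁', h₁', s₂', h₂', hne, rfl⟩
  refine h _ (sub_mem_qpskDiffs h₁ h₁') _ (sub_mem_qpskDiffs h₂ h₂') fun hzero => hne ?_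
  simp only [Prod.ext_iff, Prod.fst_zero, Prod.snd_zero, sub_eq_zero] at hzero ⊢
  exact hzero

lemma qpskDmin_le_sqrt_cos (γ θ : ℝ) :
    qpskDmin γ θ ≤ √(2 * (1 + γ ^ 2 - 2 * γ * Real.cos θ)) := by
  refine (qpskDmin_le (s₁ := 1) (s₂ := -1) (s₁' := -I) (s₂' := I) (by simp) (by simp) (by simp)
    (by simp) (by simp [Prod.ext_iff, Complex.ext_iff])).trans_eq ?_
  rw [norm_def, exp_mul_I]
  congr 1
  simp only [normSq_apply, add_re, add_im, sub_re, sub_im, mul_re, mul_im, neg_re, neg_im, one_re,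
    one_im, I_re, I_im, ofReal_re, ofReal_im, cos_ofReal_re, sin_ofReal_re, cos_ofReal_im,
    sin_ofReal_im]
  linear_combination (2 * γ ^ 2) * Real.sin_sq_add_cos_sq θ

lemma qpskDmin_le_sqrt_cos_add_sin (γ θ : ℝ) :
    qpskDmin γ θ ≤ √(4 + 2 * γ ^ 2 - 4 * γ * (Real.cos θ + Real.sin θ)) := by
  refine (qpskDmin_le (s₁ := 1) (s₂ := I) (s₁' := -1) (s₂' := 1) (by simp) (by simp) (by simp)
    (by simp) (by simp [Prod.ext_iff, Complex.ext_iff])).trans_eq ?_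
  rw [norm_def, exp_mul_I]
  congr 1
  simp only [normSq_apply, add_re, add_im, sub_re, sub_im, mul_re, mul_im, neg_re, neg_im, one_re,
    one_im, I_re, I_im, ofReal_re, ofReal_im, cos_ofReal_re, sin_ofReal_re, cos_ofReal_im,
    sin_ofReal_im]
  linear_combination (2 * γ ^ 2) * Real.sin_sq_add_cos_sq θ

local notation "θ⋆" => Real.arcsin (1 / (2 * √2))

lemma sqrt_two_mul_sin_thetaStar : √2 * Real.sin θ⋆ = 1 / 2 := by
  have h : 0 ≤ 1 / (2 * √2) := by positivity
  rw [Real.sin_arcsin (by linarith)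
    (by rw [div_le_one (by positivity)]; linarith [one_lt_sqrt_two])]
  field_simp

lemma sqrt_two_mul_cos_thetaStar : √2 * Real.cos θ⋆ = √7 / 2 := by
  have h : 2 * (1 - (1 / (2 * √2)) ^ 2) = 7 / 2 ^ 2 := by
    rw [div_pow, mul_pow, Real.sq_sqrt zero_le_two]
    norm_num
  rw [Real.cos_arcsin, ← Real.sqrt_mul zero_le_two, h, Real.sqrt_div' _ (by positivity),
    Real.sqrt_sq zero_le_two]

lemma sqrt_seven_div_two_le_sqrt_two_mul_cos {θ : ℝ} (h₀ : 0 ≤ θ) (h : θ ≤ θ⋆) :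
    √7 / 2 ≤ √2 * Real.cos θ := by
  rw [← sqrt_two_mul_cos_thetaStar]
  gcongr
  have hπ : θ⋆ ≤ π / 2 := Real.arcsin_le_pi_div_two _
  exact Real.cos_le_cos_of_nonneg_of_le_pi h₀ (by linarith [pi_pos]) h

lemma sqrt_two_mul_cos_add_sin (θ : ℝ) :
    √2 * (Real.cos θ + Real.sin θ) = 2 * Real.sin (θ + π / 4) := by
  rw [Real.sin_add, Real.cos_pi_div_four, Real.sin_pi_div_four]
  ring

lemma sqrt_seven_add_one_div_two_le_sqrt_two_mul_cos_add_sin {θ : ℝ} (h : θ⋆ ≤ θ)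
    (hπ : θ ≤ π / 4) :
    (√7 + 1) / 2 ≤ √2 * (Real.cos θ + Real.sin θ) := by
  rw [show (√7 + 1) / 2 = √2 * (Real.cos θ⋆ + Real.sin θ⋆) by
    rw [mul_add, sqrt_two_mul_cos_thetaStar, sqrt_two_mul_sin_thetaStar]; ring]
  rw [sqrt_two_mul_cos_add_sin, sqrt_two_mul_cos_add_sin]
  gcongr
  have h₀ : 0 ≤ θ⋆ := Real.arcsin_nonneg.mpr (by positivity)
  exact Real.sin_le_sin_of_le_of_le_pi_div_two (by linarith [pi_pos]) (by linarith) (by linarith)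

lemma sqrt_two_mul_exp_thetaStar : (√2 : ℂ) * exp (θ⋆ * I) = ⟨√7 / 2, 1 / 2⟩ := by
  have h : (√2 : ℂ) * exp (θ⋆ * I) = ↑(√2 * Real.cos θ⋆) + ↑(√2 * Real.sin θ⋆) * I := by
    rw [exp_mul_I, ← ofReal_cos, ← ofReal_sin]
    push_cast
    ring
  rw [h, sqrt_two_mul_cos_thetaStar, sqrt_two_mul_sin_thetaStar]
  apply Complex.ext <;> simp

lemma six_sub_two_mul_sqrt_seven_le_normSq {Δ₁ Δ₂ : ℂ} (h₁ : Δ₁ ∈ qpskDiffs)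
    (h₂ : Δ₂ ∈ qpskDiffs) (hne : (Δ₁, Δ₂) ≠ 0) :
    6 - 2 * √7 ≤ normSq (Δ₁ + ⟨√7 / 2, 1 / 2⟩ * Δ₂) := by
  have h7 : √7 ^ 2 = 7 := Real.sq_sqrt (by norm_num)
  have h7lb : 2.64 < √7 := by nlinarith [Real.sqrt_nonneg 7]
  have h7ub : √7 < 2.65 := by nlinarith [Real.sqrt_nonneg 7]
  simp only [qpskDiffs, Set.mem_insert_iff, Set.mem_singleton_iff] at h₁ h₂
  rcases h₁ with rfl | rfl | rfl | rfl | rfl | rfl | rfl | rfl | rfl <;>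
  rcases h₂ with rfl | rfl | rfl | rfl | rfl | rfl | rfl | rfl | rfl <;>
  first
  | exact absurd rfl hne
  | (simp only [normSq_apply, add_re, add_im, mul_re, mul_im, neg_re, neg_im, sub_re, sub_im,
      I_re, I_im, one_re, one_im, zero_re, zero_im, re_ofNat, im_ofNat]; nlinarith)

/-- **Example 6 (part).** On the arc `γ = √2`, `θ ∈ [0, π/4]`, the minimum distance of the
effective QPSK constellation is maximized at `θ* = arcsin(1/(2√2)) ≈ 20.7°`, where it
equals `√(6 − 2√7)`; hence the optimal rotation for the violation circle centred at
`(√2, π/4)` is by `π/4 − θ*` clockwise. -/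
theorem qpsk_optimal_rotation_at_gamma_sqrt_two :
    qpskDmin (Real.sqrt 2) (Real.arcsin (1 / (2 * Real.sqrt 2))) =
      Real.sqrt (6 - 2 * Real.sqrt 7) ∧
    ∀ θ ∈ Set.Icc (0 : ℝ) (Real.pi / 4),
      qpskDmin (Real.sqrt 2) θ ≤ Real.sqrt (6 - 2 * Real.sqrt 7) := by
  have h2 : √2 ^ 2 = 2 := Real.sq_sqrt zero_le_two
  refine ⟨le_antisymm ?_ ?_, fun θ ⟨h₀, hπ⟩ => ?_⟩
  · refine (qpskDmin_le_sqrt_cos _ _).trans_eq (congrArg _ ?_)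
    linear_combination 2 * h2 - 4 * sqrt_two_mul_cos_thetaStar
  · refine le_qpskDmin fun Δ₁ h₁ Δ₂ h₂ hne => ?_
    rw [sqrt_two_mul_exp_thetaStar, norm_def]
    exact Real.sqrt_le_sqrt (six_sub_two_mul_sqrt_seven_le_normSq h₁ h₂ hne)
  · rcases le_total θ θ⋆ with h | h
    · refine (qpskDmin_le_sqrt_cos _ _).trans (Real.sqrt_le_sqrt ?_)
      linarith [sqrt_seven_div_two_le_sqrt_two_mul_cos h₀ h]
    · refine (qpskDmin_le_sqrt_cos_add_sin _ _).trans (Real.sqrt_le_sqrt ?_)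
      linarith [sqrt_seven_add_one_div_two_le_sqrt_two_mul_cos_add_sin h hπ]
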